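/- arXiv:1409.4360 — 2 statements merged into one kernel-verified Lean document; each statement's English description precedes it below -/
import Mathlib

section
/- For the MAJ/AND mixture family with parameter β, the total ρ-biased influence at ρ = δ is I(δ) = 3β(1-δ²)/2 + 3(1-β)(1-δ)²/4. If β > 2/3 and δ* = 3(1-β)/(1-3β), then I(δ*) > 1. -/
/-!
Coordinate `i` of `MAJ3` is pivotal exactly when the other two inputs disagree, an event of
probability `(1 - ρ²)/2` under `D_ρ`; coordinate `i` of `AND3` is pivotal exactly when the other
two inputs are both TRUE (`-1`), an event of probability `((1 - ρ)/2)²`. Summing over the three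
coordinates gives `I(δ)`. At `δ*` we have `δ*(1 - 3β) = 3(1 - β)`, hence `(1 - δ*)(1 - 3β) = -2`,
and `(I(δ*) - 1)(1 - 3β)² = (3β - 1)(3β - 2)`, which is positive for `β > 2/3`.
-/

open Finset

noncomputable section

/-- ±1 encoding of a Boolean value: `true ↦ 1`, `false ↦ -1`. -/
def pm (b : Bool) : ℝ := if b then 1 else -1

/-- The point of the cube `{-1,+1}^K` corresponding to `b`. -/
def pt {K : ℕ} (b : Fin K → Bool) : Fin K → ℝ := fun i => pm (b i)

/-- Parity function `χ_S(y) = ∏_{i∈S} y_i`. -/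
def chi {K : ℕ} (S : Finset (Fin K)) (y : Fin K → ℝ) : ℝ := ∏ i ∈ S, y i

/-- Fourier coefficient `f̂(S) = 2^{-K} ∑_y f(y) χ_S(y)`. -/
def fourierCoef {K : ℕ} (f : (Fin K → ℝ) → ℝ) (S : Finset (Fin K)) : ℝ :=
  (∑ b : Fin K → Bool, f (pt b) * chi S (pt b)) / 2 ^ K

/-- Probability of the point `b` under the biased product distribution `D_ρ`. -/
def wt {K : ℕ} (ρ : ℝ) (b : Fin K → Bool) : ℝ :=
  ∏ i, if b i then (1 + ρ) / 2 else (1 - ρ) / 2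

/-- Expectation of `g` under `D_ρ`. -/
def Ex {K : ℕ} (ρ : ℝ) (g : (Fin K → ℝ) → ℝ) : ℝ :=
  ∑ b : Fin K → Bool, wt ρ b * g (pt b)

/-- Flip the `i`-th coordinate of `y ∈ {-1,+1}^K`. -/
def flipAt {K : ℕ} (i : Fin K) (y : Fin K → ℝ) : Fin K → ℝ :=
  Function.update y i (-(y i))

/-- ρ-biased influence `Inf_i(f;ρ) = Pr_{y∼D_ρ}[f(y) ≠ f(y^{(i)})]`. -/
def biasedInf {K : ℕ} (f : (Fin K → ℝ) → ℝ) (i : Fin K) (ρ : ℝ) : ℝ :=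
  ∑ b : Fin K → Bool, wt ρ b * (if f (pt b) ≠ f (flipAt i (pt b)) then 1 else 0)

/-- `f` takes values in `{-1,+1}` on the cube. -/
def IsBooleanValued {K : ℕ} (f : (Fin K → ℝ) → ℝ) : Prop :=
  ∀ b : Fin K → Bool, f (pt b) = 1 ∨ f (pt b) = -1

/-- Level-set sum `σ_r(f) = ∑_{|S|=r} f̂(S)`. -/
def levelSum {K : ℕ} (f : (Fin K → ℝ) → ℝ) (r : ℕ) : ℝ :=
  ∑ S ∈ Finset.univ.filter (fun S : Finset (Fin K) => S.card = r), fourierCoef f S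

/-- 3-input majority function `MAJ(y) = sign(y₁+y₂+y₃)`. -/
def MAJ3 : (Fin 3 → ℝ) → ℝ := fun y => if 0 < y 0 + y 1 + y 2 then 1 else -1

/-- 3-input AND (with `-1` = TRUE): outputs `-1` iff all inputs are `-1`. -/
def AND3 : (Fin 3 → ℝ) → ℝ :=
  fun y => if y 0 = -1 ∧ y 1 = -1 ∧ y 2 = -1 then -1 else 1

section CubeSums

variable {α M : Type*} [Fintype α] [AddCommMonoid M]

theorem sum_fun_fin_succ {n : ℕ} (f : (Fin (n + 1) → α) → M) :
    ∑ b, f b = ∑ a, ∑ t : Fin n → α, f (Matrix.vecCons a t) := by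
  rw [← (Fin.consEquiv fun _ => α).sum_comp, Fintype.sum_prod_type]
  rfl

theorem sum_fun_fin_three (f : (Fin 3 → α) → M) :
    ∑ b, f b = ∑ x, ∑ y, ∑ z, f ![x, y, z] := by
  simp only [sum_fun_fin_succ, Fintype.sum_unique]
  congr!

end CubeSums

theorem biasedInf_MAJ3 (i : Fin 3) (ρ : ℝ) : biasedInf MAJ3 i ρ = (1 - ρ ^ 2) / 2 := by
  simp only [biasedInf, sum_fun_fin_three, Fintype.sum_bool]
  fin_cases i <;>
    norm_num [MAJ3, pt, pm, flipAt, wt, Fin.prod_univ_three, Function.update,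
      Fin.ext_iff, Matrix.cons_val_two, Matrix.tail_cons, Matrix.head_cons] <;> ring

theorem biasedInf_AND3 (i : Fin 3) (ρ : ℝ) : biasedInf AND3 i ρ = (1 - ρ) ^ 2 / 4 := by
  simp only [biasedInf, sum_fun_fin_three, Fintype.sum_bool]
  fin_cases i <;>
    norm_num [AND3, pt, pm, flipAt, wt, Fin.prod_univ_three, Function.update,
      Fin.ext_iff, Matrix.cons_val_two, Matrix.tail_cons, Matrix.head_cons] <;> ring

theorem one_lt_mixture_influence_of_fixedPoint {β δ : ℝ} (hβ : 2 / 3 < β)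
    (hδ : δ * (1 - 3 * β) = 3 * (1 - β)) :
    1 < 3 * β * (1 - δ ^ 2) / 2 + 3 * (1 - β) * (1 - δ) ^ 2 / 4 := by
  have hc : 0 < (1 - 3 * β) ^ 2 := sq_pos_of_neg (by linarith)
  have key : (3 * β * (1 - δ ^ 2) / 2 + 3 * (1 - β) * (1 - δ) ^ 2 / 4 - 1) * (1 - 3 * β) ^ 2 =
      (3 * β - 1) * (3 * β - 2) := by
    linear_combination
      (-3 * β / 2 * (δ * (1 - 3 * β) + 3 * (1 - β)) +
        3 * (1 - β) / 4 * (δ * (1 - 3 * β) + 3 * (1 - β) - 2 * (1 - 3 * β))) * hδ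
  have hpos : 0 < (3 * β - 1) * (3 * β - 2) := mul_pos (by linarith) (by linarith)
  exact sub_pos.mp (pos_of_mul_pos_left (key ▸ hpos) hc.le)

theorem mixture_influence_supercritical_general (β : ℝ) :
    (∀ δ : ℝ, -1 ≤ δ → δ ≤ 1 →
      β * ∑ i : Fin 3, biasedInf MAJ3 i δ + (1 - β) * ∑ i : Fin 3, biasedInf AND3 i δ =
        3 * β * (1 - δ ^ 2) / 2 + 3 * (1 - β) * (1 - δ) ^ 2 / 4) ∧
    (2 / 3 < β →
      1 < 3 * β * (1 - (3 * (1 - β) / (1 - 3 * β)) ^ 2) / 2 +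
            3 * (1 - β) * (1 - 3 * (1 - β) / (1 - 3 * β)) ^ 2 / 4) := by
  refine ⟨fun δ _ _ => ?_, fun hβ => one_lt_mixture_influence_of_fixedPoint hβ ?_⟩
  · simp only [biasedInf_MAJ3, biasedInf_AND3, Finset.sum_const, Finset.card_univ,
      Fintype.card_fin, nsmul_eq_mul]
    ring
  · have hc : 1 - 3 * β ≠ 0 := by linarith
    field_simp

/-- Total biased influence of the MAJ/AND mixture, and its supercriticality at the
nontrivial fixed point when `β > 2/3`. -/
theorem mixture_influence_supercritical (β : ℝ) (hβ₀ : 0 ≤ β) (hβ₁ : β ≤ 1) :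
    (∀ δ : ℝ, -1 ≤ δ → δ ≤ 1 →
      β * ∑ i : Fin 3, biasedInf MAJ3 i δ + (1 - β) * ∑ i : Fin 3, biasedInf AND3 i δ =
        3 * β * (1 - δ ^ 2) / 2 + 3 * (1 - β) * (1 - δ) ^ 2 / 4) ∧
    (2 / 3 < β →
      1 < 3 * β * (1 - (3 * (1 - β) / (1 - 3 * β)) ^ 2) / 2 +
            3 * (1 - β) * (1 - 3 * (1 - β) / (1 - 3 * β)) ^ 2 / 4) :=
  mixture_influence_supercritical_general β
end
end

section
/- For a Boolean function f : {-1,+1}^K → {-1,+1} and coordinate i, Inf_i(f;ρ) = Σ_{S∋i} Σ_{T∋i} f̂(S) f̂(T) ρ^{|S Δ T|}, where S Δ T is the symmetric difference. In particular, Inf_i(f;0) = Σ_{S∋i} f̂(S)². -/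
open Finset

noncomputable section

/-!
Flipping coordinate `i` changes the sign of exactly the characters `χ_S` with `i ∈ S`, so by
Fourier inversion `(f y - f y⁽ⁱ⁾) / 2 = ∑_{S ∋ i} f̂(S) χ_S(y)`. For Boolean-valued `f` the
indicator of `f y ≠ f y⁽ⁱ⁾` is the square of this. Expanding the square with
`χ_S χ_T = χ_{S Δ T}` and using `E_{D_ρ}[χ_U] = ρ^|U|` (independent coordinates of mean `ρ`)
gives the formula; at `ρ = 0` only the diagonal `S = T` survives.
-/

lemma pt_mul_self {K : ℕ} (b : Fin K → Bool) (j : Fin K) : pt b j * pt b j = 1 := by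
  simp only [pt, pm]
  cases b j <;> norm_num

lemma flipAt_pt {K : ℕ} (i : Fin K) (b : Fin K → Bool) :
    flipAt i (pt b) = pt (Function.update b i (!b i)) := by
  funext j
  rcases eq_or_ne j i with rfl | hji
  · simp only [flipAt, pt, Function.update_self]
    cases b j <;> simp [pm]
  · simp [flipAt, pt, Function.update_of_ne hji]

section Parity

variable {K : ℕ}

lemma chi_mul_chi {y : Fin K → ℝ} (hy : ∀ j, y j * y j = 1) (S T : Finset (Fin K)) :
    chi S y * chi T y = chi (symmDiff S T) y := by
  have hsq : (∏ j ∈ S ∩ T, y j) * ∏ j ∈ S ∩ T, y j = 1 := by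
    rw [← prod_mul_distrib]
    exact prod_eq_one fun j _ => hy j
  calc chi S y * chi T y
      = (∏ j ∈ S ∪ T, y j) * ∏ j ∈ S ∩ T, y j := prod_union_inter.symm
    _ = chi (symmDiff S T) y * ((∏ j ∈ S ∩ T, y j) * ∏ j ∈ S ∩ T, y j) := by
        rw [chi, symmDiff_eq_sup_sdiff_inf, sup_eq_union, inf_eq_inter,
          ← prod_sdiff (inter_subset_union : S ∩ T ⊆ S ∪ T)]
        ring
    _ = chi (symmDiff S T) y := by rw [hsq, mul_one]

lemma chi_flipAt (i : Fin K) (S : Finset (Fin K)) (y : Fin K → ℝ) :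
    chi S (flipAt i y) = (if i ∈ S then -1 else 1) * chi S y := by
  by_cases hi : i ∈ S
  · rw [chi, flipAt, prod_update_of_mem hi, chi, ← mul_prod_erase S y hi,
      sdiff_singleton_eq_erase, if_pos hi]
    ring
  · rw [if_neg hi, one_mul, chi, chi]
    refine prod_congr rfl fun j hj => ?_
    rw [flipAt, Function.update_of_ne (ne_of_mem_of_not_mem hj hi)]

lemma sum_chi_mul_chi (x y : Fin K → ℝ) :
    ∑ S : Finset (Fin K), chi S x * chi S y = ∏ j, (x j * y j + 1) := by
  simp only [chi, ← prod_mul_distrib, prod_add_one, powerset_univ]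

lemma sum_chi_pt_mul_chi_pt (b c : Fin K → Bool) :
    ∑ S : Finset (Fin K), chi S (pt b) * chi S (pt c) = if b = c then 2 ^ K else 0 := by
  rw [sum_chi_mul_chi]
  split_ifs with hbc
  · subst hbc
    simp only [pt_mul_self, one_add_one_eq_two, prod_const, card_univ, Fintype.card_fin]
  · obtain ⟨j, hj⟩ := Function.ne_iff.mp hbc
    refine prod_eq_zero (mem_univ j) ?_
    cases hb : b j <;> cases hc : c j <;> simp_all [pt, pm]

end Parity

lemma fourier_inversion {K : ℕ} (f : (Fin K → ℝ) → ℝ) (b : Fin K → Bool) :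
    ∑ S, fourierCoef f S * chi S (pt b) = f (pt b) := by
  simp only [fourierCoef, div_mul_eq_mul_div, ← sum_div, sum_mul, mul_assoc]
  rw [sum_comm]
  simp only [← mul_sum, sum_chi_pt_mul_chi_pt, mul_ite, mul_zero, sum_ite_eq', mem_univ,
    if_true]
  field_simp

lemma sub_flipAt_eq_two_mul_sum {K : ℕ} (f : (Fin K → ℝ) → ℝ) (i : Fin K) (b : Fin K → Bool) :
    f (pt b) - f (flipAt i (pt b)) =
      2 * ∑ S ∈ univ.filter (fun S => i ∈ S), fourierCoef f S * chi S (pt b) := by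
  conv_lhs => rw [← fourier_inversion f b, flipAt_pt, ← fourier_inversion f, ← flipAt_pt]
  rw [← sum_sub_distrib, sum_filter, mul_sum]
  refine sum_congr rfl fun S _ => ?_
  rw [chi_flipAt]
  split_ifs <;> ring

section Expectation

variable {K : ℕ} (ρ : ℝ)

lemma Ex_congr {g h : (Fin K → ℝ) → ℝ} (hgh : ∀ b, g (pt b) = h (pt b)) : Ex ρ g = Ex ρ h := by
  simp only [Ex, hgh]

lemma Ex_sum {ι : Type*} (s : Finset ι) (g : ι → (Fin K → ℝ) → ℝ) :
    Ex ρ (fun y => ∑ j ∈ s, g j y) = ∑ j ∈ s, Ex ρ (g j) := by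
  simp only [Ex, mul_sum]
  exact sum_comm

lemma Ex_const_mul (c : ℝ) (g : (Fin K → ℝ) → ℝ) : Ex ρ (fun y => c * g y) = c * Ex ρ g := by
  simp only [Ex, mul_sum]
  exact sum_congr rfl fun b _ => by ring

lemma Ex_chi (U : Finset (Fin K)) : Ex ρ (chi U) = ρ ^ U.card := by
  have factor (b : Fin K → Bool) : wt ρ b * chi U (pt b) =
      ∏ j, (if b j then (1 + ρ) / 2 else (1 - ρ) / 2) * (if j ∈ U then pm (b j) else 1) := by
    rw [prod_mul_distrib, wt, chi, prod_ite_mem, univ_inter]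
    rfl
  have marginal (j : Fin K) : ∑ x : Bool,
      (if x then (1 + ρ) / 2 else (1 - ρ) / 2) * (if j ∈ U then pm x else 1) =
        if j ∈ U then ρ else 1 := by
    rw [Fintype.sum_bool]
    by_cases hj : j ∈ U <;> simp only [hj, pm, if_true, if_false, Bool.false_eq_true, mul_one] <;>
      ring
  rw [Ex]
  simp only [factor]
  rw [← Fintype.prod_sum fun j (x : Bool) =>
      (if x then (1 + ρ) / 2 else (1 - ρ) / 2) * (if j ∈ U then pm x else 1),
    prod_congr rfl fun j _ => marginal j, prod_ite_mem, univ_inter, prod_const]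

end Expectation

lemma sq_sum_mul_chi {K : ℕ} {y : Fin K → ℝ} (hy : ∀ j, y j * y j = 1)
    (s : Finset (Finset (Fin K))) (c : Finset (Fin K) → ℝ) :
    (∑ S ∈ s, c S * chi S y) ^ 2 = ∑ S ∈ s, ∑ T ∈ s, c S * c T * chi (symmDiff S T) y := by
  rw [sq, sum_mul_sum]
  exact sum_congr rfl fun S _ => sum_congr rfl fun T _ => by
    rw [mul_mul_mul_comm, chi_mul_chi hy]

lemma ite_ne_eq_sq_half_sub {a b : ℝ} (ha : a = 1 ∨ a = -1) (hb : b = 1 ∨ b = -1) :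
    (if a ≠ b then 1 else 0) = ((a - b) / 2) ^ 2 := by
  rcases ha with rfl | rfl <;> rcases hb with rfl | rfl <;> norm_num

lemma sum_sum_mul_zero_pow_card_symmDiff {α R : Type*} [DecidableEq α] [CommSemiring R]
    (s : Finset (Finset α)) (c : Finset α → R) :
    ∑ S ∈ s, ∑ T ∈ s, c S * c T * 0 ^ (symmDiff S T).card = ∑ S ∈ s, c S ^ 2 := by
  refine sum_congr rfl fun S hS => ?_
  rw [sum_eq_single_of_mem S hS fun T _ hTS => ?_, symmDiff_self, bot_eq_empty, card_empty,
    pow_zero, mul_one, sq]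
  rw [zero_pow (card_ne_zero.2 (symmDiff_nonempty.2 hTS.symm)), mul_zero]

/-- The biased influence as a double Fourier sum over sets containing `i`, weighted by
`ρ` to the symmetric difference; in particular the unbiased influence is the sum of
squared coefficients of sets containing `i`. -/
theorem biasedInf_fourier_formula {K : ℕ} (f : (Fin K → ℝ) → ℝ)
    (hf : IsBooleanValued f) (i : Fin K) :
    (∀ ρ : ℝ, -1 ≤ ρ → ρ ≤ 1 →
      biasedInf f i ρ =
        ∑ S ∈ Finset.univ.filter (fun S : Finset (Fin K) => i ∈ S),
          ∑ T ∈ Finset.univ.filter (fun T : Finset (Fin K) => i ∈ T),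
            fourierCoef f S * fourierCoef f T * ρ ^ (symmDiff S T).card) ∧
    biasedInf f i 0 =
      ∑ S ∈ Finset.univ.filter (fun S : Finset (Fin K) => i ∈ S), fourierCoef f S ^ 2 := by
  set Fi := univ.filter (fun S : Finset (Fin K) => i ∈ S)
  have expansion (ρ : ℝ) : biasedInf f i ρ =
      ∑ S ∈ Fi, ∑ T ∈ Fi, fourierCoef f S * fourierCoef f T * ρ ^ (symmDiff S T).card := by
    calc biasedInf f i ρ = Ex ρ (fun y => if f y ≠ f (flipAt i y) then 1 else 0) := rfl
      _ = Ex ρ (fun y => ∑ S ∈ Fi, ∑ T ∈ Fi,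
            fourierCoef f S * fourierCoef f T * chi (symmDiff S T) y) := Ex_congr ρ fun b => by
          rw [ite_ne_eq_sq_half_sub (hf b) (flipAt_pt i b ▸ hf _), sub_flipAt_eq_two_mul_sum,
            mul_div_cancel_left₀ _ two_ne_zero, sq_sum_mul_chi (pt_mul_self b)]
      _ = _ := by simp only [Ex_sum, Ex_const_mul, Ex_chi]
  exact ⟨fun ρ _ _ => expansion ρ, by rw [expansion, sum_sum_mul_zero_pow_card_symmDiff]⟩
end
end
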